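/- For each n ∈ {5, 6, 7}, the super edge-magic deficiency of H_n = W_n − spoke equals 1, i.e., H_n ∪ K_1 is super edge-magic. -/

import Mathlib

open SimpleGraph

/-- A super edge-magic labeling of `G` with magic constant `k`: a bijection from
vertices and edges onto `{1, …, p+q}` sending vertices onto `{1, …, p}`, with
`f x + f (xy) + f y = k` for every edge `xy`. -/
def IsSEMWith {V : Type*} [Fintype V] (G : SimpleGraph V) (k : ℕ) : Prop :=
  ∃ (f : V → ℕ) (g : G.edgeSet → ℕ),
    Function.Injective (Sum.elim f g) ∧
    Set.range (Sum.elim f g) = Set.Icc 1 (Fintype.card V + G.edgeSet.ncard) ∧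
    Set.range f = Set.Icc 1 (Fintype.card V) ∧
    ∀ (x y : V) (h : G.Adj x y), f x + g ⟨s(x, y), G.mem_edgeSet.mpr h⟩ + f y = k

/-- `G` is super edge-magic. -/
def IsSEM {V : Type*} [Fintype V] (G : SimpleGraph V) : Prop :=
  ∃ k : ℕ, IsSEMWith G k

/-- The graph `G ∪ t K₁`: `G` together with `t` added isolated vertices. -/
def unionIsolated {V : Type*} (G : SimpleGraph V) (t : ℕ) : SimpleGraph (V ⊕ Fin t) :=
  G.map Function.Embedding.inl

/-- The super edge-magic deficiency `μₛ(G)`: the least `t` such that `G ∪ t K₁`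
is super edge-magic, or `⊤` if there is no such `t`. -/
noncomputable def semDeficiency {V : Type*} [Fintype V] (G : SimpleGraph V) : ℕ∞ :=
  sInf ((fun t : ℕ => (t : ℕ∞)) '' {t : ℕ | IsSEM (unionIsolated G t)})

/-- `H n`: the wheel `W_n` (hub `0`, rim `1, …, n`) minus the spoke `{0, 1}`. -/
def wheelMinusSpoke (n : ℕ) : SimpleGraph (Fin (n + 1)) :=
  SimpleGraph.fromRel (fun i j =>
    ((i : ℕ) = 0 ∧ 2 ≤ (j : ℕ)) ∨
    ((j : ℕ) = (i : ℕ) + 1 ∧ 1 ≤ (i : ℕ)) ∨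
    ((i : ℕ) = n ∧ (j : ℕ) = 1))

/-- The join `P_n + K̄_m`: a path `u_1 … u_n` plus `m` vertices joined to every `u_i`. -/
def pathJoin (n m : ℕ) : SimpleGraph (Fin n ⊕ Fin m) :=
  SimpleGraph.fromRel (fun a b =>
    (∃ i j : Fin n, a = Sum.inl i ∧ b = Sum.inl j ∧ (j : ℕ) = (i : ℕ) + 1) ∨
    (∃ (i : Fin n) (j : Fin m), a = Sum.inl i ∧ b = Sum.inr j))

/-- The join `K_{1,n} + K̄_m`: a star with center `Sum.inl 0` and leaves
`Sum.inl i`, `i ≠ 0`, plus `m` vertices joined to all star vertices. -/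
def starJoin (n m : ℕ) : SimpleGraph (Fin (n + 1) ⊕ Fin m) :=
  SimpleGraph.fromRel (fun a b =>
    (∃ i : Fin (n + 1), a = Sum.inl 0 ∧ b = Sum.inl i ∧ i ≠ 0) ∨
    (∃ (i : Fin (n + 1)) (j : Fin m), a = Sum.inl i ∧ b = Sum.inr j))

/-- The join `C_n + K̄_m`: a cycle `u_1 … u_n` plus `m` vertices joined to every `u_i`. -/
def cycleJoin (n m : ℕ) : SimpleGraph (Fin n ⊕ Fin m) :=
  SimpleGraph.fromRel (fun a b =>
    (∃ i j : Fin n, a = Sum.inl i ∧ b = Sum.inl j ∧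
      ((j : ℕ) = (i : ℕ) + 1 ∨ ((i : ℕ) = n - 1 ∧ (j : ℕ) = 0))) ∨
    (∃ (i : Fin n) (j : Fin m), a = Sum.inl i ∧ b = Sum.inr j))

/-- The join `G + K̄_m`: `G` plus `m` new vertices joined to every vertex of `G`. -/
def joinIsolated {V : Type*} (G : SimpleGraph V) (m : ℕ) : SimpleGraph (V ⊕ Fin m) :=
  SimpleGraph.fromRel (fun a b =>
    (∃ x y : V, a = Sum.inl x ∧ b = Sum.inl y ∧ G.Adj x y) ∨
    (∃ (x : V) (j : Fin m), a = Sum.inl x ∧ b = Sum.inr j))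

/-!
A super edge-magic labeling is determined by its vertex part `f`: the edge `xy` must carry
`k - f x - f y`, so the edge sums `f x + f y` are pairwise distinct, and conversely a vertex
numbering whose edge sums are consecutive yields such a labeling. The labelings listed for
`H₅`, `H₆`, `H₇` (with the spare label on the isolated vertex) therefore show that
`H_n ∪ K₁` is super edge-magic.

For `H_n` itself there are `2n - 1` edges, exactly as many as the possible sums `3, …, 2n + 1`
of two distinct labels from `1, …, n + 1`, so every sum occurs once. Adding them up counts every
label with the degree of its vertex (`n - 1` for the hub `c`, `2` for `x₁`, `3` otherwise):
`(n - 4) f(c) + 3 (1 + ⋯ + (n + 1)) = f(x₁) + (3 + ⋯ + (2n + 1))`. For `n = 5` this says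
`f(c) = f(x₁)`. For `n = 6, 7` it leaves two pairs `(f(c), f(x₁))`, exchanged by the dual
labeling `n + 2 - f`, so an exhaustive search over the other labels for one of the pairs suffices.
-/

open Finset

instance (n : ℕ) : DecidableRel (wheelMinusSpoke n).Adj := fun _ _ => by
  unfold wheelMinusSpoke; exact inferInstanceAs (Decidable (_ ∧ _))

instance {V : Type*} [Fintype V] [DecidableEq V] (G : SimpleGraph V) [DecidableRel G.Adj]
    (t : ℕ) : DecidableRel (unionIsolated G t).Adj := fun a b =>
  decidable_of_iff (∃ x y, G.Adj x y ∧ Sum.inl x = a ∧ Sum.inl y = b)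
    (by rw [unionIsolated, SimpleGraph.map_adj]; rfl)

theorem List.sum_eq_sum_Icc_of_nodup {l : List ℕ} {a b : ℕ} (hl : l.Nodup)
    (hmem : ∀ x ∈ l, x ∈ Set.Icc a b) (hlen : b + 1 - a ≤ l.length) :
    l.sum = ∑ i ∈ Icc a b, i := by
  have hsub : l.toFinset ⊆ Icc a b := fun x hx => by
    simpa using hmem x (List.mem_toFinset.mp hx)
  have heq : l.toFinset = Icc a b :=
    eq_of_subset_of_card_le hsub (by rwa [List.toFinset_card_of_nodup hl, Nat.card_Icc])
  rw [← heq, List.sum_toFinset _ hl, List.map_id']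

section Labeling

variable {V : Type*}

def edgeSum (f : V → ℕ) : Sym2 V → ℕ :=
  Sym2.lift ⟨fun x y => f x + f y, fun _ _ => Nat.add_comm _ _⟩

@[simp]
theorem edgeSum_mk (f : V → ℕ) (x y : V) : edgeSum f s(x, y) = f x + f y := rfl

variable [Fintype V]

structure SimpleGraph.IsDistinctSumLabeling (G : SimpleGraph V) (f : V → ℕ) : Prop where
  injective : Function.Injective f
  range_eq : Set.range f = Set.Icc 1 (Fintype.card V)
  injOn_edgeSum : Set.InjOn (edgeSum f) G.edgeSet

theorem IsSEMWith.exists_isDistinctSumLabeling {G : SimpleGraph V} {k : ℕ}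
    (h : IsSEMWith G k) : ∃ f, G.IsDistinctSumLabeling f := by
  obtain ⟨f, g, hinj, -, hf, hmagic⟩ := h
  have hsum : ∀ e (he : e ∈ G.edgeSet), edgeSum f e + g ⟨e, he⟩ = k := by
    intro e he
    induction e using Sym2.ind with
    | h x y => have := hmagic x y he; rw [edgeSum_mk]; omega
  refine ⟨f, hinj.comp Sum.inl_injective, hf, fun e he e' he' hee => ?_⟩
  have hg : g ⟨e, he⟩ = g ⟨e', he'⟩ := by
    have := hsum e he; have := hsum e' he'; omega
  exact congrArg Subtype.val (hinj.comp Sum.inr_injective hg)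

theorem isSEMWith_of_image_edgeSum [DecidableEq V] {G : SimpleGraph V} [DecidableRel G.Adj]
    (f : V → ℕ) (k : ℕ) (hf : univ.image f = Icc 1 (Fintype.card V))
    (hg : G.edgeFinset.image (fun e => k - edgeSum f e) =
      Icc (Fintype.card V + 1) (Fintype.card V + #G.edgeFinset)) :
    IsSEMWith G k := by
  set p := Fintype.card V
  set q := #G.edgeFinset
  set g : G.edgeSet → ℕ := fun e => k - edgeSum f e
  have hf_inj : Function.Injective f := by
    simpa using injOn_of_card_image_eq (s := univ) (f := f) (by simp [hf, p])
  have hg_inj : Function.Injective g := by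
    have := injOn_of_card_image_eq (by rw [hg]; simp [q])
    rintro ⟨e, he⟩ ⟨e', he'⟩ h
    exact Subtype.ext (this (by simpa using he) (by simpa using he') h)
  have hrange_f : Set.range f = Set.Icc 1 p := by
    rw [← Set.image_univ, ← coe_univ, ← coe_image, hf, coe_Icc]
  have hrange_g : Set.range g = Set.Icc (p + 1) (p + q) := by
    rw [← coe_Icc, ← hg, coe_image, coe_edgeFinset]
    ext; simp [g]
  have hg_mem : ∀ e, g e ∈ Set.Icc (p + 1) (p + q) := fun e => hrange_g ▸ ⟨e, rfl⟩
  refine ⟨f, g, hf_inj.sumElim hg_inj fun v e => ?_, ?_, hrange_f, fun x y hxy => ?_⟩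
  · have := hrange_f ▸ Set.mem_range_self v
    have := hg_mem e
    simp only [Set.mem_Icc] at *; omega
  · rw [Set.Sum.elim_range, hrange_f, hrange_g, ← coe_edgeFinset, Set.ncard_coe_finset]
    ext; simp only [Set.mem_union, Set.mem_Icc]; omega
  · have := hg_mem ⟨s(x, y), hxy⟩
    simp only [g, edgeSum_mk, Set.mem_Icc] at this ⊢; omega

namespace SimpleGraph.IsDistinctSumLabeling

variable {G : SimpleGraph V} {f : V → ℕ}

theorem mem_Icc (hf : G.IsDistinctSumLabeling f) (v : V) :
    f v ∈ Set.Icc 1 (Fintype.card V) :=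
  hf.range_eq ▸ Set.mem_range_self v

theorem edgeSum_mem_Icc (hf : G.IsDistinctSumLabeling f) {e : Sym2 V} (he : e ∈ G.edgeSet) :
    edgeSum f e ∈ Set.Icc 3 (2 * Fintype.card V - 1) := by
  induction e using Sym2.ind with
  | h x y =>
    have hne : f x ≠ f y := hf.injective.ne (G.ne_of_adj he)
    have := hf.mem_Icc x; have := hf.mem_Icc y
    simp only [edgeSum_mk, Set.mem_Icc] at *; omega

theorem sum_eq (hf : G.IsDistinctSumLabeling f) :
    ∑ v, f v = ∑ i ∈ Icc 1 (Fintype.card V), i := by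
  classical
  have himage : univ.image f = Icc 1 (Fintype.card V) := by
    rw [← coe_inj, coe_image, coe_univ, Set.image_univ, hf.range_eq, coe_Icc]
  rw [← himage, sum_image fun x _ y _ h => hf.injective h]

theorem dual (hf : G.IsDistinctSumLabeling f) :
    G.IsDistinctSumLabeling (fun v => Fintype.card V + 1 - f v) := by
  have hmem := hf.mem_Icc
  simp only [Set.mem_Icc] at hmem
  refine ⟨fun v w h => hf.injective (by have := hmem v; have := hmem w; omega), ?_, ?_⟩
  · ext m
    refine ⟨?_, fun hm => ?_⟩
    · rintro ⟨v, rfl⟩; have := hmem v; simp only [Set.mem_Icc]; omega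
    · simp only [Set.mem_Icc] at hm
      obtain ⟨v, hv⟩ : Fintype.card V + 1 - m ∈ Set.range f := by
        rw [hf.range_eq, Set.mem_Icc]; omega
      exact ⟨v, show Fintype.card V + 1 - f v = m by omega⟩
  · intro e he e' he' h
    induction e using Sym2.ind with | h x y => ?_
    induction e' using Sym2.ind with | h x' y' => ?_
    refine hf.injOn_edgeSum he he' ?_
    have := hmem x; have := hmem y; have := hmem x'; have := hmem y'
    simp only [edgeSum_mk] at h ⊢; omega

theorem of_unionIsolated_zero {f : V ⊕ Fin 0 → ℕ}
    (hf : (unionIsolated G 0).IsDistinctSumLabeling f) :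
    G.IsDistinctSumLabeling (f ∘ Sum.inl) := by
  refine ⟨hf.injective.comp Sum.inl_injective, ?_, fun e he e' he' h => ?_⟩
  · have : Set.range (f ∘ Sum.inl) = Set.range f := by
      ext; simp [Sum.exists]
    rw [this, hf.range_eq, Fintype.card_sum, Fintype.card_fin, add_zero]
  · have hmap := fun e (he : e ∈ G.edgeSet) =>
      (show e.map Sum.inl ∈ (unionIsolated G 0).edgeSet by
        rw [unionIsolated, edgeSet_map]; exact Set.mem_image_of_mem _ he)
    have := hf.injOn_edgeSum (hmap e he) (hmap e' he') (by
      induction e using Sym2.ind; induction e' using Sym2.ind; simpa using h)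
    exact Sym2.map.injective Sum.inl_injective this

end SimpleGraph.IsDistinctSumLabeling

theorem semDeficiency_eq_one {G : SimpleGraph V} (h1 : IsSEM (unionIsolated G 1))
    (h0 : ¬ IsSEM (unionIsolated G 0)) : semDeficiency G = 1 := by
  refine le_antisymm (sInf_le ⟨1, h1, by simp⟩) (le_sInf ?_)
  rintro _ ⟨t, ht, rfl⟩
  have : t ≠ 0 := by rintro rfl; exact h0 ht
  simpa using Nat.one_le_iff_ne_zero.mpr this

end Labeling

theorem exists_mem_permutations'_getD {m : ℕ} {F : Fin (m + 2) → ℕ}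
    (hF : Function.Injective F) (hrange : Set.range F = Set.Icc 1 (m + 2)) :
    ∃ t ∈ (((List.range' 1 (m + 2)).erase (F 0)).erase (F 1)).permutations',
      ∀ i : Fin (m + 2), F i = (F 0 :: F 1 :: t).getD i 0 := by
  set t := List.ofFn fun i : Fin m => F i.succ.succ
  have hofFn : List.ofFn F = F 0 :: F 1 :: t := by simp [t, List.ofFn_succ]
  have hperm : (List.ofFn F).Perm (List.range' 1 (m + 2)) := by
    rw [List.perm_ext_iff_of_nodup (List.nodup_ofFn.mpr hF) List.nodup_range']
    intro x
    rw [List.mem_ofFn, ← Set.mem_range, hrange, List.mem_range'_1, Set.mem_Icc]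
    omega
  refine ⟨t, List.mem_permutations'.mpr ?_, fun i => ?_⟩
  · simpa [hofFn] using (hperm.erase (F 0)).erase (F 1)
  · rw [← hofFn, List.getD_eq_getElem?_getD, List.getElem?_ofFn, dif_pos i.2]
    rfl

section WheelMinusSpoke

def wheelMinusSpokeEdges (n : ℕ) : List (Sym2 (Fin (n + 1))) :=
  ((List.finRange n).tail.map fun i => s(0, i.succ)) ++
    (List.finRange n).map fun i => s(i.succ, (finRotate n i).succ)

theorem length_wheelMinusSpokeEdges {n : ℕ} (hn : 1 ≤ n) :
    (wheelMinusSpokeEdges n).length = 2 * n - 1 := by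
  simp only [wheelMinusSpokeEdges, List.length_append, List.length_tail, List.length_map,
    List.length_finRange]
  omega

theorem sum_map_edgeSum_wheelMinusSpokeEdges {n : ℕ} (hn : n = 5 ∨ n = 6 ∨ n = 7)
    (F : Fin (n + 1) → ℕ) :
    ((wheelMinusSpokeEdges n).map (edgeSum F)).sum + F 1 = 3 * ∑ i, F i + (n - 4) * F 0 := by
  rcases hn with rfl | rfl | rfl <;>
    simp only [Nat.reduceAdd, wheelMinusSpokeEdges, Fin.isValue, List.finRange_succ,
      List.finRange_zero, List.map_nil, List.map_cons, Fin.succ_zero_eq_one, Fin.succ_one_eq_two,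
      Fin.reduceSucc, List.tail_cons, finRotate_apply, zero_add, Fin.reduceAdd, List.cons_append,
      List.nil_append, edgeSum_mk, List.sum_cons, List.sum_nil, add_zero, Fin.sum_univ_succ,
      univ_unique, Fin.default_eq_zero, sum_singleton, Nat.reduceSub, one_mul] <;>
    ring

theorem nodup_wheelMinusSpokeEdges {n : ℕ} (hn : n = 5 ∨ n = 6 ∨ n = 7) :
    (wheelMinusSpokeEdges n).Nodup := by
  rcases hn with rfl | rfl | rfl <;> decide

theorem mem_edgeSet_of_mem_wheelMinusSpokeEdges {n : ℕ} (hn : n = 5 ∨ n = 6 ∨ n = 7) :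
    ∀ e ∈ wheelMinusSpokeEdges n, e ∈ (wheelMinusSpoke n).edgeSet := by
  rcases hn with rfl | rfl | rfl <;> decide

/-- Decidable form of: some labeling of `H_n` with distinct edge sums gives the hub the label `a`
and `x₁` the label `b` (the list `a :: b :: t` holds the labels in vertex order). -/
def ExistsDistinctSumLabelingWith (n a b : ℕ) : Prop :=
  ∃ t ∈ (((List.range' 1 (n + 1)).erase a).erase b).permutations',
    ((wheelMinusSpokeEdges n).map (edgeSum fun i : Fin (n + 1) => (a :: b :: t).getD i 0)).Nodup

set_option maxRecDepth 100000 in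
theorem not_existsDistinctSumLabelingWith_six_three_two :
    ¬ ExistsDistinctSumLabelingWith 6 3 2 := by
  unfold ExistsDistinctSumLabelingWith; decide

set_option maxRecDepth 100000 in
theorem not_existsDistinctSumLabelingWith_seven_four_three :
    ¬ ExistsDistinctSumLabelingWith 7 4 3 := by
  unfold ExistsDistinctSumLabelingWith; decide

namespace SimpleGraph.IsDistinctSumLabeling

variable {n : ℕ} {F : Fin (n + 1) → ℕ}

theorem nodup_map_edgeSum_wheelMinusSpokeEdges (hn : n = 5 ∨ n = 6 ∨ n = 7)
    (hF : (wheelMinusSpoke n).IsDistinctSumLabeling F) :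
    ((wheelMinusSpokeEdges n).map (edgeSum F)).Nodup :=
  (nodup_wheelMinusSpokeEdges hn).map_on fun _ he _ he' =>
    hF.injOn_edgeSum (mem_edgeSet_of_mem_wheelMinusSpokeEdges hn _ he)
      (mem_edgeSet_of_mem_wheelMinusSpokeEdges hn _ he')

theorem wheelMinusSpoke_hub_relation (hn : n = 5 ∨ n = 6 ∨ n = 7)
    (hF : (wheelMinusSpoke n).IsDistinctSumLabeling F) :
    (n - 4) * F 0 + 3 * ∑ i ∈ Icc 1 (n + 1), i = F 1 + ∑ s ∈ Icc 3 (2 * n + 1), s := by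
  have hall : ((wheelMinusSpokeEdges n).map (edgeSum F)).sum = ∑ s ∈ Icc 3 (2 * n + 1), s := by
    refine List.sum_eq_sum_Icc_of_nodup (hF.nodup_map_edgeSum_wheelMinusSpokeEdges hn)
      (fun s hs => ?_) ?_
    · obtain ⟨e, he, rfl⟩ := List.mem_map.mp hs
      have := hF.edgeSum_mem_Icc (mem_edgeSet_of_mem_wheelMinusSpokeEdges hn e he)
      rw [Fintype.card_fin, Set.mem_Icc] at this
      rw [Set.mem_Icc]
      omega
    · rw [List.length_map, length_wheelMinusSpokeEdges (by omega)]
      omega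
  have hdeg := sum_map_edgeSum_wheelMinusSpokeEdges hn F
  rw [hF.sum_eq, Fintype.card_fin] at hdeg
  omega

theorem existsDistinctSumLabelingWith (hn : n = 5 ∨ n = 6 ∨ n = 7)
    (hF : (wheelMinusSpoke n).IsDistinctSumLabeling F) :
    ExistsDistinctSumLabelingWith n (F 0) (F 1) := by
  obtain ⟨m, rfl⟩ : ∃ m, n = m + 1 := ⟨n - 1, by omega⟩
  obtain ⟨t, ht, hFt⟩ := exists_mem_permutations'_getD hF.injective (by simpa using hF.range_eq)
  refine ⟨t, ht, ?_⟩
  rw [show (fun i : Fin (m + 2) => (F 0 :: F 1 :: t).getD i 0) = F from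
    funext fun i => (hFt i).symm]
  exact hF.nodup_map_edgeSum_wheelMinusSpokeEdges hn

end SimpleGraph.IsDistinctSumLabeling

end WheelMinusSpoke

theorem not_isSEM_unionIsolated_wheelMinusSpoke_zero {n : ℕ} (hn : n = 5 ∨ n = 6 ∨ n = 7) :
    ¬ IsSEM (unionIsolated (wheelMinusSpoke n) 0) := by
  rintro ⟨k, h⟩
  obtain ⟨f, hf⟩ := h.exists_isDistinctSumLabeling
  have hF := hf.of_unionIsolated_zero
  set F := f ∘ Sum.inl
  have hlin := hF.wheelMinusSpoke_hub_relation hn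
  have h0 := hF.mem_Icc 0
  have h1 := hF.mem_Icc 1
  have h01 : F 0 ≠ F 1 := hF.injective.ne (by rw [ne_eq, Fin.zero_eq_one_iff]; omega)
  have hsearch := hF.existsDistinctSumLabelingWith hn
  have hsearch_dual := hF.dual.existsDistinctSumLabelingWith hn
  rcases hn with rfl | rfl | rfl <;>
    simp only [Fintype.card_fin, Set.mem_Icc] at h0 h1 hsearch_dual <;>
    simp only [Nat.reduceSub, Fin.isValue, one_mul, Nat.reduceAdd, Nat.one_le_ofNat,
      sum_Icc_succ_top, Icc_self, sum_singleton, Nat.reduceMul, Nat.reduceLeDiff,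
      Nat.add_right_cancel_iff] at hlin
  · exact h01 hlin
  · obtain ⟨h0, h1⟩ | ⟨h0, h1⟩ : F 0 = 3 ∧ F 1 = 2 ∨ F 0 = 5 ∧ F 1 = 6 := by omega
    · exact not_existsDistinctSumLabelingWith_six_three_two (h0 ▸ h1 ▸ hsearch)
    · exact not_existsDistinctSumLabelingWith_six_three_two
        (by simpa [h0, h1] using hsearch_dual)
  · obtain ⟨h0, h1⟩ | ⟨h0, h1⟩ : F 0 = 4 ∧ F 1 = 3 ∨ F 0 = 5 ∧ F 1 = 6 := by omega
    · exact not_existsDistinctSumLabelingWith_seven_four_three (h0 ▸ h1 ▸ hsearch)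
    · exact not_existsDistinctSumLabelingWith_seven_four_three
        (by simpa [h0, h1] using hsearch_dual)

theorem isSEM_unionIsolated_wheelMinusSpoke_one {n : ℕ} (hn : n = 5 ∨ n = 6 ∨ n = 7) :
    IsSEM (unionIsolated (wheelMinusSpoke n) 1) := by
  rcases hn with rfl | rfl | rfl
  · exact ⟨20, isSEMWith_of_image_edgeSum (Sum.elim ![1, 7, 5, 3, 6, 4] ![2]) 20
      (by decide) (by decide)⟩
  · exact ⟨22, isSEMWith_of_image_edgeSum (Sum.elim ![2, 3, 1, 4, 8, 5, 6] ![7]) 22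
      (by decide) (by decide)⟩
  · exact ⟨25, isSEMWith_of_image_edgeSum (Sum.elim ![2, 3, 1, 4, 8, 5, 9, 6] ![7]) 25
      (by decide) (by decide)⟩

/-- for `n ∈ {5, 6, 7}`, `μₛ(H_n) = 1`, i.e. `H_n ∪ K₁` is super
edge-magic (and `H_n` itself is not). -/
theorem stmt7 (n : ℕ) (hn : n = 5 ∨ n = 6 ∨ n = 7) :
    semDeficiency (wheelMinusSpoke n) = 1 ∧
    IsSEM (unionIsolated (wheelMinusSpoke n) 1) :=
  ⟨semDeficiency_eq_one (isSEM_unionIsolated_wheelMinusSpoke_one hn)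
      (not_isSEM_unionIsolated_wheelMinusSpoke_zero hn),
    isSEM_unionIsolated_wheelMinusSpoke_one hn⟩
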